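/- Let r ∈ ℝ_{≥0}^K satisfy, for every subset S containing k, the existence of S̃ ⊆ S with k ∈ S̃ and ∑_{i∈S̃} r_i < I(S̃, S^c), where I(A,B) = I(X_{i∈A}; Y | X_{i∈B}) for independent inputs. If additionally the same holds for every k ∈ S₀ for some subset S₀, then r satisfies: for every S with S ∩ S₀ ≠ ∅ there exists S̃ with S ∩ S₀ ⊆ S̃ ⊆ S and ∑_{i∈S̃} r_i < I(S̃, S^c). -/

import Mathlib

/-!
Fix `k ∈ S ∩ S₀` and take the set `T₁ ∋ k` that the hypothesis provides for `S`. If `T₁` does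
not already cover `S ∩ S₀`, apply induction to the strictly smaller set `S \ T₁`, which still
meets `S₀`, to get `T₂`. Since `(S \ T₁)ᶜ = T₁ ∪ Sᶜ`, the chain rule
`I (T₂ ∪ T₁) Sᶜ = I T₂ (T₁ ∪ Sᶜ) + I T₁ Sᶜ` lets the two strict inequalities add up to one
for `T₂ ∪ T₁`.
-/

open Finset

variable {α M : Type*} [Fintype α] [DecidableEq α]
  [AddCommMonoid M] [PartialOrder M] [IsOrderedCancelAddMonoid M]
  {r : α → M} {I : Finset α → Finset α → M}

theorem sum_union_lt_of_sum_lt_of_sum_lt_sdiff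
    (hchain : ∀ A B C : Finset α, Disjoint A B → Disjoint A C →
      Disjoint B C → I (A ∪ B) C = I A (B ∪ C) + I B C)
    {S T₁ T₂ : Finset α} (hT₁ : T₁ ⊆ S) (hT₂ : T₂ ⊆ S \ T₁)
    (h₁ : ∑ i ∈ T₁, r i < I T₁ Sᶜ) (h₂ : ∑ i ∈ T₂, r i < I T₂ (S \ T₁)ᶜ) :
    ∑ i ∈ T₂ ∪ T₁, r i < I (T₂ ∪ T₁) Sᶜ := by
  have hd₂₁ : Disjoint T₂ T₁ := disjoint_of_subset_left hT₂ sdiff_disjoint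
  have hd₂ : Disjoint T₂ Sᶜ :=
    disjoint_compl_right_iff.mpr (hT₂.trans sdiff_subset)
  have hd₁ : Disjoint T₁ Sᶜ := disjoint_compl_right_iff.mpr hT₁
  have hcompl : (S \ T₁)ᶜ = T₁ ∪ Sᶜ := by rw [compl_sdiff, himp_eq]; rfl
  rw [hchain T₂ T₁ Sᶜ hd₂₁ hd₂ hd₁, sum_union hd₂₁, ← hcompl]
  exact add_lt_add h₂ h₁

theorem exists_superset_inter_sum_lt
    (hchain : ∀ A B C : Finset α, Disjoint A B → Disjoint A C →
      Disjoint B C → I (A ∪ B) C = I A (B ∪ C) + I B C)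
    {S₀ : Finset α}
    (hk : ∀ k ∈ S₀, ∀ S : Finset α, k ∈ S → ∃ T ⊆ S, k ∈ T ∧ ∑ i ∈ T, r i < I T Sᶜ)
    (S : Finset α) (hS : (S ∩ S₀).Nonempty) :
    ∃ T : Finset α, S ∩ S₀ ⊆ T ∧ T ⊆ S ∧ ∑ i ∈ T, r i < I T Sᶜ := by
  induction S using Finset.strongInduction with
  | H S ih =>
    obtain ⟨k, hkS, hkS₀⟩ := hS.exists_mem.imp fun _ => mem_inter.mp
    obtain ⟨T₁, hT₁S, hkT₁, h₁⟩ := hk k hkS₀ S hkS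
    by_cases hcover : S ∩ S₀ ⊆ T₁
    · exact ⟨T₁, hcover, hT₁S, h₁⟩
    have hne : (S \ T₁ ∩ S₀).Nonempty := by
      obtain ⟨j, hj, hjT₁⟩ := not_subset.mp hcover
      rw [mem_inter] at hj
      exact ⟨j, mem_inter.mpr ⟨mem_sdiff.mpr ⟨hj.1, hjT₁⟩, hj.2⟩⟩
    have hlt : S \ T₁ ⊂ S := sdiff_ssubset hT₁S ⟨k, hkT₁⟩
    obtain ⟨T₂, hcover₂, hT₂, h₂⟩ := ih (S \ T₁) hlt hne
    refine ⟨T₂ ∪ T₁, fun a ha => ?_, union_subset (hT₂.trans sdiff_subset) hT₁S,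
      sum_union_lt_of_sum_lt_of_sum_lt_sdiff hchain hT₁S hT₂ h₁ h₂⟩
    rw [mem_inter] at ha
    by_cases haT₁ : a ∈ T₁
    · exact mem_union_right _ haT₁
    · exact mem_union_left _ (hcover₂ (mem_inter.mpr ⟨mem_sdiff.mpr ⟨ha.1, haT₁⟩, ha.2⟩))

theorem stmt_14_general (K : ℕ) (r : Fin K → ℝ)
    (I : Finset (Fin K) → Finset (Fin K) → ℝ)
    (hchain : ∀ A B C : Finset (Fin K), Disjoint A B → Disjoint A C →
      Disjoint B C → I (A ∪ B) C = I A (B ∪ C) + I B C)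
    (S₀ : Finset (Fin K))
    (hk : ∀ k ∈ S₀, ∀ S : Finset (Fin K), k ∈ S →
      ∃ T ⊆ S, k ∈ T ∧ ∑ i ∈ T, r i < I T Sᶜ) :
    ∀ S : Finset (Fin K), (S ∩ S₀).Nonempty →
      ∃ T : Finset (Fin K), S ∩ S₀ ⊆ T ∧ T ⊆ S ∧ ∑ i ∈ T, r i < I T Sᶜ :=
  exists_superset_inter_sum_lt hchain hk

/-- Theorem 4 region identity (nontrivial inclusion `⋂_{k∈S₀} R_k ⊆ R_{S₀}`):
`I A B` abstracts `I(X_{i∈A}; Y | X_{i∈B})` for independent inputs and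
satisfies the chain rule.  If for every `k ∈ S₀` and every `S ∋ k` there is
`T ⊆ S` with `k ∈ T` and `∑_{i∈T} r_i < I T Sᶜ`, then for every `S` meeting
`S₀` there is `T` with `S ∩ S₀ ⊆ T ⊆ S` and `∑_{i∈T} r_i < I T Sᶜ`. -/
theorem stmt_14 (K : ℕ) (r : Fin K → ℝ) (hr : ∀ i, 0 ≤ r i)
    (I : Finset (Fin K) → Finset (Fin K) → ℝ)
    (hchain : ∀ A B C : Finset (Fin K), Disjoint A B → Disjoint A C →
      Disjoint B C → I (A ∪ B) C = I A (B ∪ C) + I B C)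
    (S₀ : Finset (Fin K))
    (hk : ∀ k ∈ S₀, ∀ S : Finset (Fin K), k ∈ S →
      ∃ T ⊆ S, k ∈ T ∧ ∑ i ∈ T, r i < I T Sᶜ) :
    ∀ S : Finset (Fin K), (S ∩ S₀).Nonempty →
      ∃ T : Finset (Fin K), S ∩ S₀ ⊆ T ∧ T ⊆ S ∧ ∑ i ∈ T, r i < I T Sᶜ :=
  stmt_14_general K r I hchain S₀ hk
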